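/- arXiv:2401.02067 — 3 statements merged into one kernel-verified Lean document; each statement's English description precedes it below -/
import Mathlib

section
/- Let k be a Brauer field of characteristic 0. Then the field k((t)) of formal Laurent series over k is a Brauer field. -/
/-!
By pigeonhole, more than `N` of the `n > d * N` coefficients have orders in the same class
mod `d`. Rescaling those variables by powers of `X` gives all the terms `a i * x i ^ d` the same
order, and the equation becomes `∑ B i * u i ^ d = 0` with `B i` power series with nonzero constant
term. A nontrivial zero of the reduced equation over `k` lifts to `k⟦X⟧`: keep all but one
nonzero coordinate constant and solve for the last one by Hensel's lemma, which applies because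
`d` is invertible in `k`.
-/

def IsBrauerField (k : Type*) [Field k] : Prop :=
  ∀ d : ℕ, 1 ≤ d → ∃ N : ℕ, ∀ n : ℕ, N < n → ∀ a : Fin n → k,
    ∃ x : Fin n → k, x ≠ 0 ∧ ∑ i, a i * x i ^ d = 0

namespace PowerSeries

theorem exists_pow_eq_of_constantCoeff_eq_pow {k : Type*} [Field k] {d : ℕ}
    (hd : (d : k) ≠ 0) {w : k⟦X⟧} {y : k} (hy : y ≠ 0) (hw : constantCoeff w = y ^ d) :
    ∃ s : k⟦X⟧, s ^ d = w := by
  have hroot_mod_X : (Polynomial.X ^ d - Polynomial.C w).eval (C y) ∈ Ideal.span {X} := by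
    simp [Ideal.mem_span_singleton, X_dvd_iff, hw]
  have hsimple : IsUnit ((Polynomial.X ^ d - Polynomial.C w).derivative.eval (C y)) := by
    simp only [Polynomial.derivative_sub, Polynomial.derivative_C, Polynomial.derivative_X_pow,
      sub_zero, Polynomial.eval_mul, Polynomial.eval_pow, Polynomial.eval_X,
      Polynomial.eval_natCast, isUnit_iff_constantCoeff, map_mul, map_pow,
      constantCoeff_C, map_natCast]
    exact (mul_ne_zero hd (pow_ne_zero _ hy)).isUnit
  have hd0 : d ≠ 0 := by rintro rfl; exact hd Nat.cast_zero
  obtain ⟨s, hs, -⟩ := HenselianRing.is_henselian (I := Ideal.span {X}) _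
    (Polynomial.monic_X_pow_sub_C w hd0) (C y) hroot_mod_X (hsimple.map _)
  exact ⟨s, by simpa [sub_eq_zero] using hs⟩

theorem exists_ne_zero_sum_mul_pow_eq_zero_of_constantCoeff {k ι : Type*} [Field k]
    [Fintype ι] {d : ℕ} (hd : (d : k) ≠ 0) (B : ι → k⟦X⟧) (hB : ∀ i, constantCoeff (B i) ≠ 0)
    {y : ι → k} (hy : y ≠ 0) (hsum : ∑ i, constantCoeff (B i) * y i ^ d = 0) :
    ∃ u : ι → k⟦X⟧, u ≠ 0 ∧ ∑ i, B i * u i ^ d = 0 := by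
  classical
  obtain ⟨j, hj⟩ : ∃ j, y j ≠ 0 := Function.ne_iff.mp hy
  set T := ∑ i ∈ Finset.univ.erase j, B i * C (y i) ^ d
  have hT : constantCoeff (-T * (B j)⁻¹) = y j ^ d := by
    rw [← Finset.add_sum_erase _ _ (Finset.mem_univ j)] at hsum
    simp only [T, map_mul, map_neg, map_sum, map_pow, constantCoeff_C, constantCoeff_inv]
    field_simp [hB j]
    linear_combination -hsum
  obtain ⟨s, hs⟩ := exists_pow_eq_of_constantCoeff_eq_pow hd hj hT
  have hd0 : d ≠ 0 := by rintro rfl; exact hd Nat.cast_zero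
  refine ⟨Function.update (fun i => C (y i)) j s, Function.ne_iff.mpr ⟨j, ?_⟩, ?_⟩
  · intro hs0
    simp only [Function.update_self, Pi.zero_apply] at hs0
    rw [hs0, zero_pow hd0] at hs
    exact pow_ne_zero d hj (by rw [← hT, ← hs, map_zero])
  · rw [← Finset.add_sum_erase _ _ (Finset.mem_univ j), Function.update_self, hs,
      Finset.sum_congr rfl fun i hi => by rw [Function.update_of_ne (Finset.ne_of_mem_erase hi)]]
    rw [mul_left_comm, PowerSeries.mul_inv_cancel _ (hB j)]
    ring

end PowerSeries

namespace LaurentSeries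

open HahnSeries PowerSeries

theorem mul_single_mul_coe_pow {R : Type*} [CommRing R] (a : R⸨X⸩) (m : ℤ) (u : R⟦X⟧) (d : ℕ) :
    a * (single m 1 * (u : R⸨X⸩)) ^ d =
      single (a.order + d * m) 1 * ((a.powerSeriesPart * u ^ d : R⟦X⟧) : R⸨X⸩) := by
  conv_lhs => rw [← single_order_mul_powerSeriesPart a]
  rw [mul_pow, single_pow, one_pow, coe_mul, coe_pow, nsmul_eq_mul]
  have hsplit : (single (a.order + d * m) 1 : R⸨X⸩) = single a.order 1 * single (d * m) 1 := by
    rw [single_mul_single, one_mul]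
  rw [hsplit]
  ring

theorem constantCoeff_powerSeriesPart_ne_zero {R : Type*} [Semiring R] {a : R⸨X⸩} (ha : a ≠ 0) :
    constantCoeff a.powerSeriesPart ≠ 0 := by
  rw [← coeff_zero_eq_constantCoeff_apply, powerSeriesPart_coeff, Nat.cast_zero, add_zero]
  exact mt coeff_order_eq_zero.mp ha

theorem exists_ne_zero_sum_mul_pow_eq_zero_of_order_modEq {k ι : Type*} [Field k] [Fintype ι]
    {d : ℕ} (hd : (d : k) ≠ 0) (hk : ∀ b : ι → k, ∃ y : ι → k, y ≠ 0 ∧ ∑ i, b i * y i ^ d = 0)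
    {a : ι → k⸨X⸩} (ha : ∀ i, a i ≠ 0) {o : ℤ} (ho : ∀ i, (a i).order ≡ o [ZMOD d]) :
    ∃ x : ι → k⸨X⸩, x ≠ 0 ∧ ∑ i, a i * x i ^ d = 0 := by
  obtain ⟨y, hy, hsum⟩ := hk fun i => constantCoeff (a i).powerSeriesPart
  obtain ⟨u, hu, husum⟩ :=
    PowerSeries.exists_ne_zero_sum_mul_pow_eq_zero_of_constantCoeff hd _
      (fun i => constantCoeff_powerSeriesPart_ne_zero (ha i)) hy hsum
  have hshift (i : ι) : (a i).order + d * ((o - (a i).order) / d) = o := by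
    rw [Int.mul_ediv_cancel' (ho i).dvd]
    ring
  refine ⟨fun i => single ((o - (a i).order) / d) 1 * (u i : k⸨X⸩), ?_, ?_⟩
  · obtain ⟨i, hi⟩ : ∃ i, u i ≠ 0 := Function.ne_iff.mp hu
    refine Function.ne_iff.mpr ⟨i, mul_ne_zero (single_ne_zero one_ne_zero) ?_⟩
    exact (map_ne_zero_iff _ ofPowerSeries_injective).mpr hi
  · simp_rw [mul_single_mul_coe_pow, hshift, ← Finset.mul_sum, ← map_sum, husum, map_zero,
      mul_zero]

end LaurentSeries

theorem exists_ne_zero_sum_mul_pow_eq_zero_of_subtype {R ι : Type*} [CommSemiring R] [Fintype ι]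
    {d : ℕ} (hd : d ≠ 0) {a : ι → R} (p : ι → Prop) [DecidablePred p]
    (h : ∃ x : Subtype p → R, x ≠ 0 ∧ ∑ i : Subtype p, a i * x i ^ d = 0) :
    ∃ x : ι → R, x ≠ 0 ∧ ∑ i, a i * x i ^ d = 0 := by
  obtain ⟨x, hx, hsum⟩ := h
  obtain ⟨i, hi⟩ : ∃ i, x i ≠ 0 := Function.ne_iff.mp hx
  let y (j : ι) : R := if hj : p j then x ⟨j, hj⟩ else 0
  have hy_of_mem (j : Subtype p) : y j = x j := dif_pos j.2
  have hy_of_not_mem (j : {j // ¬p j}) : y j = 0 := dif_neg j.2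
  refine ⟨y, Function.ne_iff.mpr ⟨i, by rwa [hy_of_mem]⟩, ?_⟩
  rw [← Fintype.sum_subtype_add_sum_subtype p]
  simp [hy_of_mem, hy_of_not_mem, hsum, hd]

theorem IsBrauerField.exists_bound {k : Type*} [Field k] (hk : IsBrauerField k) {d : ℕ}
    (hd : 1 ≤ d) : ∃ N : ℕ, ∀ (ι : Type*) [Fintype ι], N < Fintype.card ι → ∀ a : ι → k,
      ∃ x : ι → k, x ≠ 0 ∧ ∑ i, a i * x i ^ d = 0 := by
  obtain ⟨N, hN⟩ := hk d hd
  refine ⟨N, fun ι _ hι a => ?_⟩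
  let e := Fintype.equivFin ι
  obtain ⟨x, hx, hsum⟩ := hN _ hι (a ∘ e.symm)
  refine ⟨x ∘ e, fun h => hx ?_, ?_⟩
  · ext j
    simpa using congrFun h (e.symm j)
  · simpa [← e.sum_comp] using hsum

/-- If `k` is a Brauer field of characteristic zero, then the field `k((t))` of formal
Laurent series over `k` is a Brauer field. -/
theorem isBrauerField_laurentSeries (k : Type*) [Field k] [CharZero k]
    (hk : IsBrauerField k) : IsBrauerField (LaurentSeries k) := by
  classical
  intro d hd
  have hd0 : d ≠ 0 := by omega
  have : NeZero d := ⟨hd0⟩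
  obtain ⟨N, hN⟩ := hk.exists_bound hd
  refine ⟨d * N, fun n hn a => ?_⟩
  by_cases ha : ∃ i, a i = 0
  · obtain ⟨i, hi⟩ := ha
    refine exists_ne_zero_sum_mul_pow_eq_zero_of_subtype hd0 (fun j => a j = 0)
      ⟨1, Function.ne_iff.mpr ⟨⟨i, hi⟩, one_ne_zero⟩, Finset.sum_eq_zero fun j _ => ?_⟩
    rw [j.2, zero_mul]
  push Not at ha
  obtain ⟨r, hr⟩ := Fintype.exists_lt_card_fiber_of_mul_lt_card
    (f := fun i => ((a i).order : ZMod d)) (n := N) (by simpa [ZMod.card] using hn)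
  refine exists_ne_zero_sum_mul_pow_eq_zero_of_subtype hd0 (fun i => ((a i).order : ZMod d) = r) ?_
  have horder (i : {i // ((a i).order : ZMod d) = r}) : (a i).order ≡ r.val [ZMOD d] := by
    rw [← ZMod.intCast_eq_intCast_iff, i.2]
    simp
  exact LaurentSeries.exists_ne_zero_sum_mul_pow_eq_zero_of_order_modEq
    (Nat.cast_ne_zero.mpr hd0) (hN _ (by simpa [Fintype.card_subtype] using hr)) (fun i => ha i)
    horder
end

section
/- Let k be a Brauer field and let K/k be a finite field extension. Then K is a Brauer field. -/
open Module

section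

variable (k : Type*) [Field k]

def DiagonalSystemsSolvable (d r : ℕ) (ι : Type*) [Fintype ι] : Prop :=
  ∀ a : Fin r → ι → k, ∃ x : ι → k, x ≠ 0 ∧ ∀ j, ∑ i, a j i * x i ^ d = 0

variable {k}

namespace DiagonalSystemsSolvable

variable {d r : ℕ} {ι κ : Type*} [Fintype ι] [Fintype κ]

lemma zero [Nonempty ι] : DiagonalSystemsSolvable k d 0 ι :=
  fun _ ↦ ⟨1, one_ne_zero, fun j ↦ j.elim0⟩

lemma one_iff :
    DiagonalSystemsSolvable k d 1 ι ↔
      ∀ a : ι → k, ∃ x : ι → k, x ≠ 0 ∧ ∑ i, a i * x i ^ d = 0 :=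
  ⟨fun h a ↦ (h fun _ ↦ a).imp fun _ ⟨hx, hsum⟩ ↦ ⟨hx, hsum 0⟩,
    fun h a ↦ (h (a 0)).imp fun _ ⟨hx, hsum⟩ ↦ ⟨hx, Fin.forall_fin_one.mpr hsum⟩⟩

/-- Extend a solution by zero, using `0 ^ d = 0`. -/
lemma of_embedding (hd : d ≠ 0) (h : DiagonalSystemsSolvable k d r ι) (e : ι ↪ κ) :
    DiagonalSystemsSolvable k d r κ := by
  intro a
  obtain ⟨x, hx, hsum⟩ := h fun j ↦ a j ∘ e
  refine ⟨Function.extend e x 0, fun h0 ↦ hx ?_, fun j ↦ ?_⟩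
  · ext i
    simpa [e.injective.extend_apply] using congrFun h0 (e i)
  · rw [← hsum j]
    refine (Fintype.sum_of_injective e e.injective _ _ (fun i hi ↦ ?_) fun i ↦ ?_).symm
    · simp [Function.extend_apply' _ _ _ hi, hd]
    · simp [e.injective.extend_apply]

lemma prod {σ : Type*} [Fintype σ] (hι : DiagonalSystemsSolvable k d r ι)
    (hσ : DiagonalSystemsSolvable k d 1 σ) : DiagonalSystemsSolvable k d (r + 1) (ι × σ) := by
  intro a
  choose v hv hv_sum using fun b : ι ↦ one_iff.mp hσ fun s ↦ a 0 (b, s)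
  let c : Fin (r + 1) → ι → k := fun j b ↦ ∑ s, a j (b, s) * v b s ^ d
  obtain ⟨t, ht, ht_sum⟩ := hι fun j ↦ c j.succ
  have hsum (j : Fin (r + 1)) :
      ∑ p : ι × σ, a j p * (t p.1 * v p.1 p.2) ^ d = ∑ b, c j b * t b ^ d := by
    simp only [Fintype.sum_prod_type, c, Finset.sum_mul, mul_pow]
    exact Finset.sum_congr rfl fun _ _ ↦ Finset.sum_congr rfl fun _ _ ↦ by ring
  refine ⟨fun p ↦ t p.1 * v p.1 p.2, ?_, Fin.cases ?_ fun j ↦ ?_⟩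
  · obtain ⟨b, hb⟩ := Function.ne_iff.mp ht
    obtain ⟨s, hs⟩ := Function.ne_iff.mp (hv b)
    exact Function.ne_iff.mpr ⟨(b, s), mul_ne_zero hb hs⟩
  · simp [hsum, c, hv_sum]
  · rw [hsum]
    exact ht_sum j

variable {K : Type*} [Field K] [Algebra k K] [FiniteDimensional k K]

lemma of_mul_finrank (h : DiagonalSystemsSolvable k d (r * finrank k K) ι) :
    DiagonalSystemsSolvable K d r ι := by
  intro a
  let B := finBasis k K
  obtain ⟨x, hx, hsum⟩ := h fun p i ↦ B.repr (a (finProdFinEquiv.symm p).1 i)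
    (finProdFinEquiv.symm p).2
  refine ⟨fun i ↦ algebraMap k K (x i), fun h0 ↦ hx ?_, fun j ↦ ?_⟩
  · ext i
    simpa using congrFun h0 i
  · have hsmul : ∑ i, a j i * algebraMap k K (x i) ^ d = ∑ i, x i ^ d • a j i := by
      simp only [Algebra.smul_def, map_pow, mul_comm]
    rw [hsmul, ← B.repr.map_eq_zero_iff]
    ext l
    simpa [mul_comm] using hsum (finProdFinEquiv (j, l))

end DiagonalSystemsSolvable

open DiagonalSystemsSolvable

lemma isBrauerField_iff_diagonalSystemsSolvable :
    IsBrauerField k ↔ ∀ d : ℕ, 1 ≤ d → ∃ N : ℕ, ∀ n : ℕ, N < n →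
      DiagonalSystemsSolvable k d 1 (Fin n) := by
  simp only [IsBrauerField, one_iff]

lemma IsBrauerField.exists_diagonalSystemsSolvable (hk : IsBrauerField k) {d : ℕ} (hd : 1 ≤ d)
    (r : ℕ) : ∃ N : ℕ, ∀ n : ℕ, N < n → DiagonalSystemsSolvable k d r (Fin n) := by
  induction r with
  | zero => exact ⟨0, fun n hn ↦ have : NeZero n := ⟨by omega⟩; zero⟩
  | succ r ih =>
    obtain ⟨S, hS⟩ := isBrauerField_iff_diagonalSystemsSolvable.mp hk d hd
    obtain ⟨R, hR⟩ := ih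
    refine ⟨(R + 1) * (S + 1), fun n hn ↦ ?_⟩
    exact ((hR _ R.lt_succ_self).prod (hS _ S.lt_succ_self)).of_embedding (by omega)
      (finProdFinEquiv.toEmbedding.trans (Fin.castLEEmb hn.le))

end

/-- A finite extension of a Brauer field is a Brauer field. -/
theorem isBrauerField_of_finiteDimensional (k K : Type*) [Field k] [Field K]
    [Algebra k K] [FiniteDimensional k K] (hk : IsBrauerField k) :
    IsBrauerField K := by
  refine isBrauerField_iff_diagonalSystemsSolvable.mpr fun d hd ↦ ?_
  obtain ⟨N, hN⟩ := hk.exists_diagonalSystemsSolvable hd (1 * finrank k K)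
  exact ⟨N, fun n hn ↦ (hN n hn).of_mul_finrank⟩
end

section
/- Let k be an infinite Brauer field, let d ≥ 1, and let e ∈ {0, 1, ..., d} with e ≠ 1. Then there exists a constant C, depending only on d and k, with the following property: for every n > C, every a_1, ..., a_n ∈ k, and every choice of nonzero b_1, ..., b_n ∈ k, there exist vectors x, y ∈ k^n such that a_1 x_1^e y_1^{d−e} + ... + a_n x_n^e y_n^{d−e} = 0 and b_1 x_1 y_1^{d−1} + ... + b_n x_n y_n^{d−1} ≠ 0. -/
/-!
A Brauer field gives a nontrivial solution `u` of `∑ aᵢ uᵢ^e = 0` (of `∑ aᵢ uᵢ^d = 0` if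
`e = 0`). For `e = 0` take `y = u` and `x` a unit vector at a coordinate where `u` does not
vanish. For `e ≥ 2` rescale `(xᵢ, yᵢ) = (uᵢ wᵢ^{-(d-e)}, wᵢ^e)`: this keeps `xᵢ^e yᵢ^{d-e} = uᵢ^e`
but multiplies `xᵢ yᵢ^{d-1}` by `wᵢ^{d(e-1)}`, a nonconstant power since `e ≠ 1`. Varying a
single `wᵢ` with `uᵢ ≠ 0` over the infinite field then makes `∑ bᵢ xᵢ yᵢ^{d-1}` nonzero.
-/

open Finset Polynomial

section

variable {k : Type*} [Field k]

lemma exists_ne_zero_add_mul_pow_ne_zero [Infinite k] {m : ℕ} (hm : m ≠ 0) (s : k) {c : k}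
    (hc : c ≠ 0) : ∃ t : k, t ≠ 0 ∧ s + c * t ^ m ≠ 0 := by
  classical
  obtain ⟨t, ht⟩ := Infinite.exists_notMem_finset
    (insert 0 (X ^ m - C (-s / c) : k[X]).roots.toFinset)
  rw [mem_insert, Multiset.mem_toFinset, not_or,
    mem_roots (X_pow_sub_C_ne_zero (Nat.pos_of_ne_zero hm) _)] at ht
  refine ⟨t, ht.1, fun h => ht.2 ?_⟩
  simp only [IsRoot, eval_sub, eval_pow, eval_X, eval_C]
  field_simp
  linear_combination h

lemma rescale_pow_mul_pow (u : k) {w : k} (hw : w ≠ 0) (m e : ℕ) :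
    (u * w⁻¹ ^ m) ^ e * (w ^ e) ^ m = u ^ e := by
  rw [mul_pow, ← pow_mul, ← pow_mul, inv_pow, mul_comm m e, mul_assoc,
    inv_mul_cancel₀ (pow_ne_zero _ hw), mul_one]

lemma rescale_mul_pow_pred (u : k) {w : k} (hw : w ≠ 0) {d e : ℕ} (he : 1 ≤ e) (hed : e ≤ d) :
    u * w⁻¹ ^ (d - e) * (w ^ e) ^ (d - 1) = u * w ^ (d * (e - 1)) := by
  obtain ⟨f, rfl⟩ := Nat.exists_eq_add_of_le hed
  obtain ⟨g, rfl⟩ := Nat.exists_eq_add_of_le' he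
  rw [Nat.add_sub_cancel_left, Nat.add_sub_cancel, show g + 1 + f - 1 = g + f by omega, inv_pow]
  field_simp
  ring

variable {ι : Type*} [Fintype ι] [DecidableEq ι]

lemma exists_sum_mul_mul_pow_ne_zero {b y : ι → k} (hb : ∀ i, b i ≠ 0) (hy : y ≠ 0) (m : ℕ) :
    ∃ x : ι → k, ∑ i, b i * x i * y i ^ m ≠ 0 := by
  obtain ⟨i₀, hi₀⟩ := Function.ne_iff.mp hy
  refine ⟨Pi.single i₀ 1, ?_⟩
  rw [Fintype.sum_eq_single i₀ fun i hi => by simp [hi], Pi.single_eq_same, mul_one]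
  exact mul_ne_zero (hb i₀) (pow_ne_zero _ hi₀)

lemma exists_rescale_sum_ne_zero [Infinite k] {d e : ℕ} (he : 2 ≤ e) (hed : e ≤ d)
    (a : ι → k) {b u : ι → k} (hb : ∀ i, b i ≠ 0) (hu : u ≠ 0) :
    ∃ x y : ι → k, ∑ i, a i * x i ^ e * y i ^ (d - e) = ∑ i, a i * u i ^ e ∧
      ∑ i, b i * x i * y i ^ (d - 1) ≠ 0 := by
  obtain ⟨i₀, hi₀⟩ := Function.ne_iff.mp hu
  obtain ⟨t, ht, hsum⟩ := exists_ne_zero_add_mul_pow_ne_zero (m := d * (e - 1))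
    (mul_ne_zero (by omega) (by omega)) (∑ i ∈ {i₀}ᶜ, b i * u i) (mul_ne_zero (hb i₀) hi₀)
  set w : ι → k := Function.update 1 i₀ t
  have hw : ∀ i, w i ≠ 0 := fun i => by
    by_cases h : i = i₀ <;> simp [w, h, ht]
  refine ⟨fun i => u i * (w i)⁻¹ ^ (d - e), fun i => w i ^ e, ?_, ?_⟩
  · refine sum_congr rfl fun i _ => ?_
    rw [mul_assoc, rescale_pow_mul_pow _ (hw i)]
  · have hterm : ∀ i, b i * (u i * (w i)⁻¹ ^ (d - e)) * (w i ^ e) ^ (d - 1)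
        = b i * u i * w i ^ (d * (e - 1)) := fun i => by
      rw [mul_assoc, rescale_mul_pow_pred _ (hw i) (by omega) hed, mul_assoc]
    simp only [hterm]
    rw [Fintype.sum_eq_add_sum_compl i₀, add_comm]
    convert hsum using 2
    · refine sum_congr rfl fun i hi => ?_
      have hi : i ≠ i₀ := by simpa using hi
      simp [w, hi]
    · simp [w]

end

/-- Over an infinite Brauer field `k`, for `d ≥ 1` and `e ∈ {0, …, d}` with `e ≠ 1`, there
is a constant `C` such that for any `n > C`, any `a_i ∈ k` and any nonzero `b_i ∈ k` one
can find `x, y ∈ k^n` with `∑ a_i x_i^e y_i^{d−e} = 0` and `∑ b_i x_i y_i^{d−1} ≠ 0`. -/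
theorem atomic_lemma (k : Type*) [Field k] [Infinite k] (hk : IsBrauerField k)
    (d : ℕ) (hd : 1 ≤ d) (e : ℕ) (he : e ≤ d) (he1 : e ≠ 1) :
    ∃ C : ℕ, ∀ n : ℕ, C < n → ∀ a b : Fin n → k, (∀ i, b i ≠ 0) →
      ∃ x y : Fin n → k,
        ∑ i, a i * x i ^ e * y i ^ (d - e) = 0 ∧
        ∑ i, b i * x i * y i ^ (d - 1) ≠ 0 := by
  rcases Nat.eq_zero_or_pos e with rfl | he0
  · obtain ⟨N, hN⟩ := hk d hd
    refine ⟨N, fun n hn a b hb => ?_⟩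
    obtain ⟨y, hy, hsol⟩ := hN n hn a
    obtain ⟨x, hx⟩ := exists_sum_mul_mul_pow_ne_zero hb hy (d - 1)
    exact ⟨x, y, by simpa using hsol, hx⟩
  · obtain ⟨N, hN⟩ := hk e he0
    refine ⟨N, fun n hn a b hb => ?_⟩
    obtain ⟨u, hu, hsol⟩ := hN n hn a
    obtain ⟨x, y, hxy, hne⟩ := exists_rescale_sum_ne_zero (by omega) he a hb hu
    exact ⟨x, y, hxy.trans hsol, hne⟩
end
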